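/- For the period-doubling word S (fixed point of 0 ↦ 01, 1 ↦ 00), the Abelian complexity satisfies ρ^{(1)}_S(2^m) = 2 for every m ≥ 0. -/

import Mathlib

/-- Number of occurrences of `x` as a factor of `u`. -/
def occ {α : Type*} [DecidableEq α] (u x : List α) : ℕ :=
  ((List.range (u.length + 1)).filter (fun i => decide (x <+: u.drop i))).length

/-- `k`-Abelian equivalence: same number of occurrences of every word of length at most `k`. -/
def KAbEq {α : Type*} [DecidableEq α] (k : ℕ) (u v : List α) : Prop :=
  ∀ x : List α, x.length ≤ k → occ u x = occ v x

/-- The factor of the infinite word `w` of length `n` starting at position `i`. -/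
def factorAt {α : Type*} (w : ℕ → α) (i n : ℕ) : List α :=
  (List.range n).map (fun j => w (i + j))

/-- `k`-Abelian complexity: the number of `k`-Abelian classes of length-`n` factors of `w`. -/
noncomputable def rho {α : Type*} [DecidableEq α] (k : ℕ) (w : ℕ → α) (n : ℕ) : ℕ :=
  Set.ncard { C : Set (List α) | ∃ i : ℕ,
    C = { v | (∃ j : ℕ, v = factorAt w j n) ∧ KAbEq k v (factorAt w i n) } }

/-!
The weight (number of `1`s) of a length-`2n` factor of the period-doubling word `S` starting
at `i` is `n` minus the weight of the length-`n` factor starting at `i / 2`: every aligned pair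
`S (2k), S (2k + 1)` is `0, ¬S k`. Hence `x ↦ n - x` maps the set of weights of length-`n`
factors bijectively onto that of length-`2n` factors, so all lengths `2 ^ m` have as many
weights as length `1`, namely two. Abelian classes of factors correspond to their Parikh
vectors, which for a binary word and a fixed length are determined by the weight.
-/

section Abelian

variable {α : Type*} [DecidableEq α]

theorem occ_cons (b : α) (u x : List α) :
    occ (b :: u) x = (if x <+: b :: u then 1 else 0) + occ u x := by
  simp only [occ, List.length_cons, List.range_succ_eq_map, List.filter_cons, List.drop_zero,
    List.filter_map, Function.comp_def, Nat.succ_eq_add_one, List.drop_succ_cons]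
  by_cases hx : x <+: b :: u <;> simp [hx, Nat.add_comm]

theorem occ_nil (u : List α) : occ u [] = u.length + 1 := by
  induction u with
  | nil => rfl
  | cons b u ih => simp [occ_cons, ih, Nat.add_comm]

theorem occ_singleton (u : List α) (a : α) : occ u [a] = u.count a := by
  induction u with
  | nil => rfl
  | cons b u ih =>
    rw [occ_cons, ih, List.count_cons, Nat.add_comm]
    rcases eq_or_ne a b with rfl | hab
    · simp
    · simp [List.cons_prefix_cons, hab, Ne.symm hab]

theorem kAbEq_one_iff_perm {u v : List α} : KAbEq 1 u v ↔ u.Perm v := by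
  refine ⟨fun h => List.perm_iff_count.2 fun a => ?_, fun h x hx => ?_⟩
  · simpa only [occ_singleton] using h [a] le_rfl
  · match x, hx with
    | [], _ => rw [occ_nil, occ_nil, h.length_eq]
    | [a], _ => rw [occ_singleton, occ_singleton, h.count_eq]

theorem rho_one_eq_ncard_range_coe (w : ℕ → α) (n : ℕ) :
    rho 1 w n = (Set.range fun i => (factorAt w i n : Multiset α)).ncard := by
  set parikh : ℕ → Multiset α := fun i => (factorAt w i n : Multiset α)
  set cls : Multiset α → Set (List α) :=
    fun M => {v | (∃ j, v = factorAt w j n) ∧ (v : Multiset α) = M}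
  have hcls : ∀ i, {v | (∃ j, v = factorAt w j n) ∧ KAbEq 1 v (factorAt w i n)} =
      cls (parikh i) := by
    intro i
    simp only [cls, parikh, kAbEq_one_iff_perm, Multiset.coe_eq_coe]
  have hinj : Set.InjOn cls (Set.range parikh) := by
    rintro _ ⟨i, rfl⟩ _ ⟨j, rfl⟩ h
    have hi : factorAt w i n ∈ cls (parikh i) := ⟨⟨i, rfl⟩, rfl⟩
    rw [h] at hi
    exact hi.2
  rw [rho]
  simp only [hcls]
  rw [← hinj.ncard_image, ← Set.range_comp]
  exact congrArg Set.ncard (Set.ext fun C => exists_congr fun i => eq_comm)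

end Abelian

theorem factorAt_length {α : Type*} (w : ℕ → α) (i n : ℕ) : (factorAt w i n).length = n := by
  simp [factorAt]

theorem factorAt_add {α : Type*} (w : ℕ → α) (i m n : ℕ) :
    factorAt w i (m + n) = factorAt w i m ++ factorAt w (i + m) n := by
  simp [factorAt, List.range_add, Nat.add_assoc]

theorem perm_iff_count_true_eq {u v : List Bool} (h : u.length = v.length) :
    u.Perm v ↔ u.count true = v.count true := by
  refine ⟨fun hp => hp.count_eq true, fun ht => List.perm_iff_count.2 fun a => ?_⟩
  cases a
  · have hu := List.count_not_add_count u true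
    have hv := List.count_not_add_count v true
    simp only [Bool.not_true] at hu hv
    omega
  · exact ht

theorem rho_one_eq_ncard_range_count_true (w : ℕ → Bool) (n : ℕ) :
    rho 1 w n = (Set.range fun i => (factorAt w i n).count true).ncard := by
  have hinj : Set.InjOn (Multiset.count true)
      (Set.range fun i => (factorAt w i n : Multiset Bool)) := by
    rintro _ ⟨i, rfl⟩ _ ⟨j, rfl⟩ h
    simp only [Multiset.coe_count] at h
    rw [Multiset.coe_eq_coe, perm_iff_count_true_eq (by simp only [factorAt_length])]
    exact h
  rw [rho_one_eq_ncard_range_coe, ← hinj.ncard_image, ← Set.range_comp]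
  simp only [Function.comp_def, Multiset.coe_count]

section PeriodDoubling

variable {S : ℕ → Bool}

theorem count_true_factorAt_two_add_count_true_factorAt_one
    (hS0 : ∀ n, S (2 * n) = false) (hS1 : ∀ n, S (2 * n + 1) = !S n) (i : ℕ) :
    (factorAt S i 2).count true + (factorAt S (i / 2) 1).count true = 1 := by
  simp only [factorAt, List.range_succ, List.range_zero, List.map_cons, List.map_nil,
    List.nil_append, List.cons_append, Nat.add_zero]
  obtain ⟨k, rfl | rfl⟩ := Nat.even_or_odd' i
  · rw [hS0, hS1, Nat.mul_div_cancel_left k two_pos]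
    cases S k <;> rfl
  · rw [show 2 * k + 1 + 1 = 2 * (k + 1) by ring, hS0, hS1,
      show (2 * k + 1) / 2 = k by omega]
    cases S k <;> rfl

theorem count_true_factorAt_two_mul_add
    (hS0 : ∀ n, S (2 * n) = false) (hS1 : ∀ n, S (2 * n + 1) = !S n) (n i : ℕ) :
    (factorAt S i (2 * n)).count true + (factorAt S (i / 2) n).count true = n := by
  induction n with
  | zero => rfl
  | succ n ih =>
    have hpair := count_true_factorAt_two_add_count_true_factorAt_one hS0 hS1 (i + 2 * n)
    rw [show (i + 2 * n) / 2 = i / 2 + n by omega] at hpair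
    rw [Nat.mul_succ, factorAt_add, factorAt_add, List.count_append, List.count_append]
    omega

theorem range_count_true_factorAt_two_mul
    (hS0 : ∀ n, S (2 * n) = false) (hS1 : ∀ n, S (2 * n + 1) = !S n) (n : ℕ) :
    (Set.range fun i => (factorAt S i (2 * n)).count true) =
      (n - ·) '' Set.range fun i => (factorAt S i n).count true := by
  have hhalf : Function.Surjective (· / 2 : ℕ → ℕ) := fun j => ⟨2 * j, by simp⟩
  rw [← Set.range_comp, ← hhalf.range_comp (_ ∘ _)]
  congr 1
  funext i
  have := count_true_factorAt_two_mul_add hS0 hS1 n i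
  simp only [Function.comp_apply]
  omega

theorem ncard_range_count_true_factorAt_two_mul
    (hS0 : ∀ n, S (2 * n) = false) (hS1 : ∀ n, S (2 * n + 1) = !S n) (n : ℕ) :
    (Set.range fun i => (factorAt S i (2 * n)).count true).ncard =
      (Set.range fun i => (factorAt S i n).count true).ncard := by
  rw [range_count_true_factorAt_two_mul hS0 hS1]
  refine Set.InjOn.ncard_image ?_
  rintro _ ⟨i, rfl⟩ _ ⟨j, rfl⟩ h
  have hi : (factorAt S i n).count true ≤ n := List.count_le_length.trans_eq (factorAt_length ..)
  have hj : (factorAt S j n).count true ≤ n := List.count_le_length.trans_eq (factorAt_length ..)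
  dsimp only at h ⊢
  omega

theorem range_count_true_factorAt_one
    (hS0 : ∀ n, S (2 * n) = false) (hS1 : ∀ n, S (2 * n + 1) = !S n) :
    (Set.range fun i => (factorAt S i 1).count true) = {0, 1} := by
  have h0 : S 0 = false := hS0 0
  have h1 : S 1 = true := by simpa [h0] using hS1 0
  ext x
  simp only [factorAt, List.range_one, List.map_cons, List.map_nil, Set.mem_range,
    Set.mem_insert_iff, Set.mem_singleton_iff]
  constructor
  · rintro ⟨i, rfl⟩
    cases S (i + 0) <;> simp
  · rintro (rfl | rfl)
    · exact ⟨0, by simp [h0]⟩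
    · exact ⟨1, by simp [h1]⟩

theorem ncard_range_count_true_factorAt_two_pow
    (hS0 : ∀ n, S (2 * n) = false) (hS1 : ∀ n, S (2 * n + 1) = !S n) (m : ℕ) :
    (Set.range fun i => (factorAt S i (2 ^ m)).count true).ncard = 2 := by
  induction m with
  | zero => rw [pow_zero, range_count_true_factorAt_one hS0 hS1, Set.ncard_pair zero_ne_one]
  | succ m ih => rwa [pow_succ', ncard_range_count_true_factorAt_two_mul hS0 hS1]

end PeriodDoubling

theorem stmt7 (S : ℕ → Bool)
    (hS0 : ∀ n, S (2 * n) = false) (hS1 : ∀ n, S (2 * n + 1) = !S n)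
    (m : ℕ) :
    rho 1 S (2 ^ m) = 2 := by
  rw [rho_one_eq_ncard_range_count_true, ncard_range_count_true_factorAt_two_pow hS0 hS1]
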